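/- arXiv:2505.23546 — 2 statements merged into one kernel-verified Lean document; each statement's English description precedes it below -/
import Mathlib

section
/- Let λ_new, λ_k ∈ ℝ, δ₁, δ₂ ∈ {0,1}, and 0 < ε < 1. Suppose −δ₁ ≤ λ_new − λ_k ≤ 1 − (1+ε)·δ₁ and −δ₂ ≤ λ_k − λ_new ≤ 1 − (1+ε)·δ₂, and that λ_new, λ_k ∈ [−1, 1] with |λ_new − λ_k| ≥ ε whenever λ_new ≠ λ_k. Then: λ_new < λ_k if and only if (δ₁ = 1 and δ₂ = 0); λ_new > λ_k if and only if (δ₁ = 0 and δ₂ = 1); and λ_new = λ_k if and only if (δ₁ = 0 and δ₂ = 0). -/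
theorem stmt_8 (lamNew lamK δ₁ δ₂ ε : ℝ)
    (hδ₁ : δ₁ = 0 ∨ δ₁ = 1) (hδ₂ : δ₂ = 0 ∨ δ₂ = 1)
    (hε : 0 < ε) (hε1 : ε < 1)
    (h1l : -δ₁ ≤ lamNew - lamK) (h1r : lamNew - lamK ≤ 1 - (1 + ε) * δ₁)
    (h2l : -δ₂ ≤ lamK - lamNew) (h2r : lamK - lamNew ≤ 1 - (1 + ε) * δ₂)
    (hbNew : lamNew ∈ Set.Icc (-1:ℝ) 1) (hbK : lamK ∈ Set.Icc (-1:ℝ) 1)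
    (hgap : lamNew ≠ lamK → ε ≤ |lamNew - lamK|) :
    (lamNew < lamK ↔ δ₁ = 1 ∧ δ₂ = 0) ∧
    (lamK < lamNew ↔ δ₁ = 0 ∧ δ₂ = 1) ∧
    (lamNew = lamK ↔ δ₁ = 0 ∧ δ₂ = 0) := by
  rcases hδ₁ with h1|h1 <;> rcases hδ₂ with h2|h2 <;>
    subst h1 <;> subst h2 <;>
    refine ⟨⟨?_,?_⟩,⟨?_,?_⟩,⟨?_,?_⟩⟩ <;> intro h <;>
    first
      | (constructor <;> linarith)
      | linarith
      | (obtain ⟨ha,hb⟩ := h; linarith)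
end

section
/- Let λ¹, λ², ... , λᴷ ∈ ℝ and p¹, ..., pᴷ ∈ [0,1] satisfy: λᵏ < λˡ whenever pᵏ < pˡ, and λᵏ = λˡ whenever 0 < pᵏ = pˡ < 1. Then there exists a continuous strictly increasing function g : [0,1] → ℝ such that for every k: if 0 < pᵏ < 1 then g(pᵏ) = λᵏ; if pᵏ = 0 then g(0) ≥ λᵏ; and if pᵏ = 1 then g(1) ≤ λᵏ. -/
theorem stmt_15 (K : ℕ) (hK : 0 < K) (lam p : Fin K → ℝ)
    (hpmem : ∀ k, p k ∈ Set.Icc (0:ℝ) 1)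
    (hord : ∀ k l, p k < p l → lam k < lam l)
    (heq : ∀ k l, 0 < p k → p k = p l → p l < 1 → lam k = lam l) :
    ∃ g : ℝ → ℝ, ContinuousOn g (Set.Icc (0:ℝ) 1) ∧
      StrictMonoOn g (Set.Icc (0:ℝ) 1) ∧
      ∀ k, (0 < p k → p k < 1 → g (p k) = lam k) ∧
        (p k = 0 → lam k ≤ g 0) ∧ (p k = 1 → g 1 ≤ lam k) := by
  haveI : NeZero K := ⟨hK.ne'⟩
  have hne : (Finset.univ : Finset (Fin K)).Nonempty := Finset.univ_nonempty
  -- the set of slopes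
  set s : Finset ℝ := insert 1
    (((Finset.univ : Finset (Fin K × Fin K)).filter (fun q => p q.1 < p q.2)).image
      (fun q => (lam q.2 - lam q.1) / (p q.2 - p q.1))) with hs_def
  have hsne : s.Nonempty := ⟨1, Finset.mem_insert_self _ _⟩
  have hspos : ∀ x ∈ s, (0:ℝ) < x := by
    intro x hx
    rcases Finset.mem_insert.mp hx with h | h
    · simp [h]
    · obtain ⟨q, hq, rfl⟩ := Finset.mem_image.mp h
      have hq' := (Finset.mem_filter.mp hq).2
      exact div_pos (sub_pos.mpr (hord _ _ hq')) (sub_pos.mpr hq')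
  set ε := s.min' hsne with hε_def
  set L := s.max' hsne with hL_def
  have hεpos : 0 < ε := hspos _ (s.min'_mem hsne)
  have hLpos : 0 < L := hspos _ (s.max'_mem hsne)
  have hratio : ∀ k l, p k < p l → (lam l - lam k) / (p l - p k) ∈ s := by
    intro k l h
    exact Finset.mem_insert_of_mem (Finset.mem_image.mpr
      ⟨(k, l), Finset.mem_filter.mpr ⟨Finset.mem_univ _, h⟩, rfl⟩)
  have hε : ∀ k l, p k < p l → ε * (p l - p k) ≤ lam l - lam k := by
    intro k l h
    have hd : (0:ℝ) < p l - p k := sub_pos.mpr h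
    have := s.min'_le _ (hratio k l h)
    calc ε * (p l - p k) ≤ (lam l - lam k) / (p l - p k) * (p l - p k) := by
          exact mul_le_mul_of_nonneg_right this hd.le
      _ = lam l - lam k := div_mul_cancel₀ _ hd.ne'
  have hL : ∀ k l, p k < p l → lam l - lam k ≤ L * (p l - p k) := by
    intro k l h
    have hd : (0:ℝ) < p l - p k := sub_pos.mpr h
    have := s.le_max' _ (hratio k l h)
    calc lam l - lam k = (lam l - lam k) / (p l - p k) * (p l - p k) :=
          (div_mul_cancel₀ _ hd.ne').symm
      _ ≤ L * (p l - p k) := mul_le_mul_of_nonneg_right this hd.le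
  set C := (Finset.univ.inf' hne lam) - ε - 1 with hC_def
  have hC : ∀ k (x : ℝ), x ≤ 1 → C + ε * x < lam k := by
    intro k x hx
    have h1 : C + ε * x ≤ C + ε := by nlinarith
    have h2 : Finset.univ.inf' hne lam ≤ lam k := Finset.inf'_le _ (Finset.mem_univ k)
    simp only [hC_def]; linarith
  set F : Fin K → ℝ → ℝ := fun k x =>
    if p k < 1 then lam k + min (ε * (x - p k)) (L * (x - p k)) else C + ε * x with hF_def
  have hFmono : ∀ k, StrictMono (F k) := by
    intro k x y hxy
    simp only [hF_def]
    split
    · have h1 : ε * (x - p k) < ε * (y - p k) := by nlinarith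
      have h2 : L * (x - p k) < L * (y - p k) := by nlinarith
      exact add_lt_add_right (max_lt (lt_min (min_le_left _ _ |>.trans_lt h1)
        ((min_le_right _ _).trans_lt h2)) (lt_min (min_le_left _ _ |>.trans_lt h1)
        ((min_le_right _ _).trans_lt h2)) |> fun h => lt_min
          ((min_le_left _ _).trans_lt h1) ((min_le_right _ _).trans_lt h2) |> fun h =>
          lt_of_le_of_lt (le_refl _) h) _ |>.trans_le (le_refl _)
    · nlinarith
  have hFcont : ∀ k, Continuous (F k) := by
    intro k
    simp only [hF_def]
    split
    · exact continuous_const.add ((continuous_const.mul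
        (continuous_id.sub continuous_const)).min
        (continuous_const.mul (continuous_id.sub continuous_const)))
    · exact continuous_const.add (continuous_const.mul continuous_id)
  set g : ℝ → ℝ := fun x => Finset.univ.sup' hne (fun k => F k x) with hg_def
  have hgcont : Continuous g :=
    Continuous.finset_sup'_apply hne (fun i _ => hFcont i)
  -- upper bound on F at data points
  have hFle : ∀ k j, 0 < p j → p j < 1 → F k (p j) ≤ lam j := by
    intro k j hj0 hj1
    simp only [hF_def]
    split_ifs with hk
    · rcases lt_trichotomy (p k) (p j) with h | h | h
      · have := hε k j h
        have : min (ε * (p j - p k)) (L * (p j - p k)) ≤ ε * (p j - p k) := min_le_left _ _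
        nlinarith [hε k j ‹p k < p j›]
      · have : lam k = lam j := heq k j (h ▸ hj0) h (h ▸ hj1)
        simp [h, this]
      · have := hL j k h
        have hm : min (ε * (p j - p k)) (L * (p j - p k)) ≤ L * (p j - p k) := min_le_right _ _
        nlinarith
    · exact (hC j (p j) hj1.le).le
  refine ⟨g, hgcont.continuousOn, ?_, ?_⟩
  · intro x _ y _ hxy
    obtain ⟨k0, _, hk0⟩ := Finset.exists_mem_eq_sup' hne (fun k => F k x)
    calc g x = F k0 x := hk0
      _ < F k0 y := hFmono k0 hxy
      _ ≤ g y := Finset.le_sup' (fun k => F k y) (Finset.mem_univ k0)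
  · intro k
    refine ⟨?_, ?_, ?_⟩
    · intro h0 h1
      apply le_antisymm
      · exact Finset.sup'_le hne _ (fun j _ => hFle j k h0 h1)
      · have : F k (p k) = lam k := by simp [hF_def, h1]
        exact this ▸ Finset.le_sup' (fun j => F j (p k)) (Finset.mem_univ k)
    · intro h0
      have : F k 0 = lam k := by
        simp [hF_def, h0, show (0:ℝ) < 1 by norm_num]
      exact this ▸ Finset.le_sup' (fun j => F j 0) (Finset.mem_univ k)
    · intro h1
      apply Finset.sup'_le hne _ (fun j _ => ?_)
      simp only [hF_def]
      split_ifs with hj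
      · have := hε j k (h1 ▸ hj)
        have hm : min (ε * (1 - p j)) (L * (1 - p j)) ≤ ε * (1 - p j) := min_le_left _ _
        nlinarith
      · exact (hC k 1 le_rfl).le
end
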